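/- arXiv:2204.03106 — 2 statements merged into one kernel-verified Lean document; each statement's English description precedes it below -/
import Mathlib

section
/- With M = ℤ⟨L, E₁, E₂, E₃, E₄⟩ and the Weyl group action as above, the direct sum M ⊕ (ℤF₁ ⊕ ℤF₂) (trivial action on F₁, F₂) decomposes as a direct sum of the submodule generated by Lᵢ − F₁ − F₂ for i = 1,...,5 and the submodule generated by 3L−E₁−E₂−E₃−E₄−F₁−2F₂ and 3L−E₁−E₂−E₃−E₄−2F₁−F₂; i.e., these seven elements form a ℤ-basis of M ⊕ ℤF₁ ⊕ ℤF₂. -/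
/-- With `M = ℤ⟨L,E₁,E₂,E₃,E₄⟩` and trivial summand `ℤF₁ ⊕ ℤF₂` (coordinates
with respect to the basis `L,E₁,E₂,E₃,E₄,F₁,F₂` of `M ⊕ ℤF₁ ⊕ ℤF₂ ≅ ℤ⁷`),
the seven elements `Lᵢ − F₁ − F₂` (`i = 1,…,5`, with `L₅ = L`,
`L₄ = 2L−E₁−E₂−E₃`, `L₃ = 2L−E₁−E₂−E₄`, `L₂ = 2L−E₁−E₃−E₄`,
`L₁ = 2L−E₂−E₃−E₄`), `3L−E₁−E₂−E₃−E₄−F₁−2F₂` and `3L−E₁−E₂−E₃−E₄−2F₁−F₂`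
form a ℤ-basis of `ℤ⁷`: the change-of-basis matrix has determinant `±1`. -/
theorem seven_vectors_form_basis :
    let v : Fin 7 → (Fin 7 → ℤ) :=
      ![![2, 0, -1, -1, -1, -1, -1],   -- L₁ − F₁ − F₂
        ![2, -1, 0, -1, -1, -1, -1],   -- L₂ − F₁ − F₂
        ![2, -1, -1, 0, -1, -1, -1],   -- L₃ − F₁ − F₂
        ![2, -1, -1, -1, 0, -1, -1],   -- L₄ − F₁ − F₂
        ![1, 0, 0, 0, 0, -1, -1],      -- L₅ − F₁ − F₂
        ![3, -1, -1, -1, -1, -1, -2],  -- 3L−E₁−E₂−E₃−E₄−F₁−2F₂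
        ![3, -1, -1, -1, -1, -2, -1]]  -- 3L−E₁−E₂−E₃−E₄−2F₁−F₂
    ((Matrix.of v).det = 1 ∨ (Matrix.of v).det = -1) ∧
    ∃ b : Module.Basis (Fin 7) ℤ (Fin 7 → ℤ), ∀ i, b i = v i := by
  intro v
  set A : Matrix (Fin 7) (Fin 7) ℤ := Matrix.of v with hA
  set B : Matrix (Fin 7) (Fin 7) ℤ := Matrix.of
      ![![-2, -2, -2, -2, -1, 3, 3],
        ![0, -1, -1, -1, 0, 1, 1],
        ![-1, 0, -1, -1, 0, 1, 1],
        ![-1, -1, 0, -1, 0, 1, 1],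
        ![-1, -1, -1, 0, 0, 1, 1],
        ![-1, -1, -1, -1, -1, 2, 1],
        ![-1, -1, -1, -1, -1, 1, 2]] with hB
  have hAB : A * B = 1 := by decide
  have hBA : B * A = 1 := by decide
  have hdet : A.det * B.det = 1 := by rw [← Matrix.det_mul, hAB, Matrix.det_one]
  constructor
  · exact Int.isUnit_iff.mp (IsUnit.of_mul_eq_one _ hdet)
  · have hinvA : Invertible A := ⟨B, hBA, hAB⟩
    have hinv : Invertible A.transpose := (Matrix.transposeInvertibleEquivInvertible A).symm hinvA
    refine ⟨(Pi.basisFun ℤ (Fin 7)).map (Matrix.toLinearEquiv' _ hinv), fun i => ?_⟩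
    ext j
    simp [Matrix.toLinearEquiv', Matrix.toLin'_apply, Matrix.mulVec_single,
      Matrix.transpose_apply, hA]
end

section
/- There exist exactly two conjugacy classes of embeddings of A₅ into S₆: the point stabilizer embedding and its twist by an outer automorphism of S₆; equivalently, S₆ contains subgroups isomorphic to A₅ acting transitively on 6 points, and such subgroups are not conjugate to the point-stabilizer copies A₅ ≤ A₆ ≤ S₆ fixing a point. -/
/-- The standard copy of `A₅` inside `S₆`: the image of the alternating group on
`{0,…,4}` under the embedding `Fin 5 ↪ Fin 6` (it fixes the last point). -/
noncomputable def stdA5 : Subgroup (Equiv.Perm (Fin 6)) :=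
  Subgroup.map (Equiv.Perm.viaEmbeddingHom (Fin.castSuccEmb))
    (alternatingGroup (Fin 5))

lemma cardA5 : Nat.card (alternatingGroup (Fin 5)) = 60 := by
  have h := @two_mul_card_alternatingGroup (Fin 5) _ _ _
  have h2 : Fintype.card (Equiv.Perm (Fin 5)) = 120 := by
    simp [Fintype.card_perm]; rfl
  rw [Nat.card_eq_fintype_card]
  omega

lemma cardSylow5 : Nat.card (Sylow 5 (alternatingGroup (Fin 5))) = 6 := by
  haveI : Fact (Nat.Prime 5) := ⟨by norm_num⟩
  obtain ⟨P⟩ : Nonempty (Sylow 5 (alternatingGroup (Fin 5))) := Sylow.nonempty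
  have hP : Nat.card (P : Subgroup (alternatingGroup (Fin 5))) = 5 := by
    rw [P.card_eq_multiplicity, cardA5]
    rw [show (60:ℕ) = 5 * 12 by norm_num,
      Nat.factorization_mul (by norm_num) (by norm_num)]
    simp [Nat.Prime.factorization_self (by norm_num : Nat.Prime 5),
      Nat.factorization_eq_zero_of_not_dvd (by norm_num : ¬ 5 ∣ 12)]
  have hidx : (P : Subgroup (alternatingGroup (Fin 5))).index = 12 := by
    have := Subgroup.card_mul_index (P : Subgroup (alternatingGroup (Fin 5)))
    rw [hP, cardA5] at this
    omega
  have hdvd := Sylow.card_dvd_index P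
  rw [hidx] at hdvd
  have hmod' : Nat.card (Sylow 5 (alternatingGroup (Fin 5))) % 5 = 1 :=
    card_sylow_modEq_one 5 (alternatingGroup (Fin 5))
  have hne1 : Nat.card (Sylow 5 (alternatingGroup (Fin 5))) ≠ 1 := by
    intro h1
    haveI hsub : Subsingleton (Sylow 5 (alternatingGroup (Fin 5))) :=
      (Nat.card_eq_one_iff_unique.mp h1).1
    have hnorm : (P : Subgroup (alternatingGroup (Fin 5))).Normal := by
      rw [← Subgroup.normalizer_eq_top_iff, eq_top_iff]
      intro g _
      exact Sylow.smul_eq_iff_mem_normalizer.mp (Subsingleton.elim _ _)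
    rcases hnorm.eq_bot_or_eq_top with h | h <;> rw [h] at hP
    · rw [Subgroup.card_bot] at hP; omega
    · rw [Subgroup.card_top, cardA5] at hP; omega
  set n := Nat.card (Sylow 5 (alternatingGroup (Fin 5))) with hn
  clear_value n
  have hle : n ≤ 12 := Nat.le_of_dvd (by norm_num) hdvd
  interval_cases n <;> omega

/-- There are two conjugacy classes of embeddings `A₅ ↪ S₆`, differing by the
outer automorphism of `S₆`: there exists an embedding of `A₅` into `S₆` whose
image acts transitively on the 6 points, and the image of any such transitive
embedding is not conjugate in `S₆` to the standard (point-stabilizer) copy of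
`A₅`. -/
theorem transitive_A5_in_S6_not_conjugate_to_standard :
    (∃ φ : ↥(alternatingGroup (Fin 5)) →* Equiv.Perm (Fin 6),
      Function.Injective φ ∧ ∀ x y : Fin 6, ∃ g, φ g x = y) ∧
    (∀ φ : ↥(alternatingGroup (Fin 5)) →* Equiv.Perm (Fin 6),
      Function.Injective φ → (∀ x y : Fin 6, ∃ g, φ g x = y) →
      ∀ σ : Equiv.Perm (Fin 6),
        Subgroup.map (MulAut.conj σ).toMonoidHom φ.range ≠ stdA5) := by
  haveI : Fact (Nat.Prime 5) := ⟨by norm_num⟩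
  have key : ∀ φ : ↥(alternatingGroup (Fin 5)) →* Equiv.Perm (Fin 6),
      (∀ x y : Fin 6, ∃ g, φ g x = y) → Function.Injective φ := by
    intro φ htr
    rw [← MonoidHom.ker_eq_bot_iff]
    rcases (MonoidHom.normal_ker φ).eq_bot_or_eq_top with h | h
    · exact h
    · exfalso
      obtain ⟨g, hg⟩ := htr 0 1
      have h1 : φ g = 1 := MonoidHom.mem_ker.mp (h ▸ Subgroup.mem_top g)
      rw [h1] at hg
      simp at hg
  constructor
  · haveI := Fintype.ofFinite (Sylow 5 (alternatingGroup (Fin 5)))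
    obtain ⟨e⟩ : Nonempty (Sylow 5 (alternatingGroup (Fin 5)) ≃ Fin 6) :=
      ⟨Fintype.equivFinOfCardEq (by rw [← Nat.card_eq_fintype_card]; exact cardSylow5)⟩
    set ψ := MulAction.toPermHom (alternatingGroup (Fin 5))
      (Sylow 5 (alternatingGroup (Fin 5))) with hψ
    refine ⟨{ toFun := fun g => e.permCongr (ψ g),
              map_one' := by ext x; simp
              map_mul' := by
                intro a b; ext x
                simp [Equiv.permCongr_apply, Equiv.Perm.mul_apply] }, ?_⟩
    have htrans : ∀ x y : Fin 6, ∃ g : ↥(alternatingGroup (Fin 5)),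
        e.permCongr (ψ g) x = y := by
      intro x y
      obtain ⟨g, hg⟩ := MulAction.exists_smul_eq (alternatingGroup (Fin 5))
        (e.symm x) (e.symm y)
      exact ⟨g, by simp [Equiv.permCongr_apply, hψ, hg]⟩
    exact ⟨key _ htrans, htrans⟩
  · intro φ hinj htr σ heq
    have hfix : ∀ π ∈ stdA5, π (Fin.last 5) = Fin.last 5 := by
      rintro π ⟨p, _, rfl⟩
      refine Equiv.Perm.viaEmbedding_apply_of_notMem _ _ _ ?_
      rintro ⟨i, hi⟩
      exact (Fin.castSucc_lt_last i).ne hi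
    have hall : ∀ g, φ g (σ⁻¹ (Fin.last 5)) = σ⁻¹ (Fin.last 5) := by
      intro g
      have hmem : (MulAut.conj σ) (φ g) ∈ stdA5 := by
        rw [← heq]
        exact ⟨φ g, ⟨g, rfl⟩, rfl⟩
      have h1 := hfix _ hmem
      simp only [MulAut.conj_apply, Equiv.Perm.mul_apply] at h1
      refine σ.injective ?_
      simpa using h1
    obtain ⟨y, hy⟩ := exists_ne (σ⁻¹ (Fin.last 5))
    obtain ⟨g, hg⟩ := htr (σ⁻¹ (Fin.last 5)) y
    rw [hall g] at hg
    exact hy hg.symm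
end
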